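/- arXiv:1309.0655 — 5 statements merged into one kernel-verified Lean document; each statement's English description precedes it below -/
import Mathlib

section
/- Let e_1 < e_2 < ... < e_n < 0 be real numbers and let N be a natural number with N > |e_1| / min{e_i - e_j : i > j}. Assume that for every μ ∈ ℤ^n with |μ| := Σ|μ_j| ≤ 4N+8, one has μ·e = 0 if and only if μ = 0. If m = (m_{ij})_{i≠j} is a family of nonnegative integers indexed by ordered pairs of distinct indices in {1,...,n} with total sum |m| ≤ 2N+4 and Σ_{i,j} m_{ij}(e_i - e_j) = 0, then writing the monomial Z^m := Π_{i≠j}(z_i z̄_j)^{m_{ij}} as z^μ z̄^ν for μ, ν ∈ ℕ^n, one has μ = ν; in particular Z^m = |z_1|^{2l_1}···|z_n|^{2l_n} for some (l_1,...,l_n) ∈ ℕ^n. -/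
/-!
Expanding `Z^m` gives `z^μ z̄^ν` with `μ_i = ∑_j m_{ij}` and `ν_i = ∑_j m_{ji}`. The integer
vector `μ - ν` has `ℓ¹`-norm at most `2|m| ≤ 4N + 8`, and the resonance condition says exactly
`(μ - ν) · e = 0`, so nonresonance forces `μ = ν`; then `z_i^{μ_i} z̄_i^{μ_i} = |z_i|^{2μ_i}`.
-/

open Finset

section DegreeImbalance

variable {ι : Type*} [Fintype ι]

def degreeImbalance (m : ι → ι → ℕ) (i : ι) : ℤ :=
  ∑ j, (m i j : ℤ) - ∑ j, (m j i : ℤ)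

theorem degreeImbalance_eq_zero_iff (m : ι → ι → ℕ) :
    degreeImbalance m = 0 ↔ ∀ i, ∑ j, m i j = ∑ j, m j i := by
  simp only [funext_iff, degreeImbalance, Pi.zero_apply, sub_eq_zero]
  exact forall_congr' fun i => by exact_mod_cast Iff.rfl

theorem sum_abs_degreeImbalance_le (m : ι → ι → ℕ) :
    ∑ i, |degreeImbalance m i| ≤ 2 * ∑ i, ∑ j, (m i j : ℤ) :=
  calc ∑ i, |degreeImbalance m i|
      ≤ ∑ i, (∑ j, (m i j : ℤ) + ∑ j, (m j i : ℤ)) := by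
        gcongr with i
        refine (abs_sub _ _).trans_eq ?_
        rw [abs_of_nonneg (by positivity), abs_of_nonneg (by positivity)]
    _ = 2 * ∑ i, ∑ j, (m i j : ℤ) := by
        rw [sum_add_distrib, sum_comm (f := fun i j => (m j i : ℤ))]
        ring

theorem sum_degreeImbalance_mul {R : Type*} [CommRing R] (m : ι → ι → ℕ) (e : ι → R) :
    ∑ i, (degreeImbalance m i : R) * e i = ∑ i, ∑ j, (m i j : R) * (e i - e j) := by
  simp only [degreeImbalance, Int.cast_sub, Int.cast_sum, Int.cast_natCast, sub_mul, sum_mul,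
    mul_sub, sum_sub_distrib]
  rw [sum_comm (f := fun i j => (m j i : R) * e i)]

end DegreeImbalance

theorem prod_prod_mul_pow {ι M : Type*} [Fintype ι] [CommMonoid M]
    (a b : ι → M) (m : ι → ι → ℕ) :
    ∏ i, ∏ j, (a i * b j) ^ m i j = ∏ i, a i ^ (∑ j, m i j) * b i ^ (∑ j, m j i) := by
  simp only [mul_pow, prod_mul_distrib, prod_pow_eq_pow_sum]
  rw [prod_comm (f := fun i j => b j ^ m i j)]
  simp only [prod_pow_eq_pow_sum]

theorem Complex.pow_mul_conj_pow (z : ℂ) (k : ℕ) :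
    z ^ k * (starRingEnd ℂ) z ^ k = (‖z‖ : ℂ) ^ (2 * k) := by
  rw [← mul_pow, Complex.mul_conj', pow_mul]

theorem stmt0_general (n : ℕ) (e : Fin n → ℝ) (N : ℕ)
    (hnonres : ∀ μ : Fin n → ℤ, (∑ j, |μ j|) ≤ 4 * (N : ℤ) + 8 →
      ((∑ j, (μ j : ℝ) * e j) = 0 ↔ μ = 0))
    (m : Fin n → Fin n → ℕ)
    (hsum : (∑ i, ∑ j, m i j) ≤ 2 * N + 4)
    (hres : (∑ i, ∑ j, (m i j : ℝ) * (e i - e j)) = 0) :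
    (∀ i, (∑ j, m i j) = ∑ j, m j i) ∧
    ∃ l : Fin n → ℕ, ∀ z : Fin n → ℂ,
      (∏ i, ∏ j, (z i * (starRingEnd ℂ) (z j)) ^ (m i j))
        = ∏ i, ((‖z i‖ : ℂ)) ^ (2 * l i) := by
  have hbound : ∑ i, |degreeImbalance m i| ≤ 4 * (N : ℤ) + 8 := by
    have : ∑ i, ∑ j, (m i j : ℤ) ≤ 2 * N + 4 := by exact_mod_cast hsum
    linarith [sum_abs_degreeImbalance_le m]
  have hbal : ∀ i, ∑ j, m i j = ∑ j, m j i :=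
    (degreeImbalance_eq_zero_iff m).mp <|
      (hnonres _ hbound).mp <| (sum_degreeImbalance_mul m e).trans hres
  refine ⟨hbal, fun i => ∑ j, m i j, fun z => ?_⟩
  rw [prod_prod_mul_pow]
  exact prod_congr rfl fun i _ => by rw [← hbal i, Complex.pow_mul_conj_pow]

/-- Lemma on resonant monomials: under the nonresonance hypothesis (H3), a monomial
`Z^m = ∏_{i≠j} (z_i z̄_j)^{m_{ij}}` with `|m| ≤ 2N+4` and
`∑ m_{ij}(e_i - e_j) = 0` has equal holomorphic and antiholomorphic multi-degrees,
hence is a function of `|z_1|²,...,|z_n|²`. -/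
theorem stmt0 (n : ℕ) (hn : 0 < n) (e : Fin n → ℝ) (N : ℕ)
    (hmono : ∀ i j : Fin n, i < j → e i < e j)
    (hneg : ∀ j, e j < 0)
    (hN : ∀ i j : Fin n, i < j → |e ⟨0, hn⟩| < (N : ℝ) * (e j - e i))
    (hnonres : ∀ μ : Fin n → ℤ, (∑ j, |μ j|) ≤ 4 * (N : ℤ) + 8 →
      ((∑ j, (μ j : ℝ) * e j) = 0 ↔ μ = 0))
    (m : Fin n → Fin n → ℕ) (hdiag : ∀ i, m i i = 0)
    (hsum : (∑ i, ∑ j, m i j) ≤ 2 * N + 4)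
    (hres : (∑ i, ∑ j, (m i j : ℝ) * (e i - e j)) = 0) :
    (∀ i, (∑ j, m i j) = ∑ j, m j i) ∧
    ∃ l : Fin n → ℕ, ∀ z : Fin n → ℂ,
      (∏ i, ∏ j, (z i * (starRingEnd ℂ) (z j)) ^ (m i j))
        = ∏ i, ((‖z i‖ : ℂ)) ^ (2 * l i) :=
  stmt0_general n e N hnonres m hsum hres
end

section
/- Let e_1 < ... < e_n < 0 be real numbers and N ∈ ℕ with N > |e_1| / min{e_j - e_i : j > i}. Let m = (m_{ij})_{i≠j} be a multi-index of nonnegative integers with |m| ≥ 2N+3 and let j ∈ {1,...,n}. Then there exist multi-indices a = (a_{ij}), b = (b_{ij}) of nonnegative integers supported on pairs i < j, with Σ_{i<j} a_{ij} = N+1 = Σ_{i<j} b_{ij} and a_{ij} + b_{ij} ≤ m_{ij} + m_{ji} for all i < j, and indices k, l ∈ {1,...,n}, such that Σ_{i<j} a_{ij}(e_i - e_j) - e_k < 0, Σ_{i<j} b_{ij}(e_i - e_j) - e_l < 0, and for all z ∈ ℂ^n with |z| ≤ 1 one has |z_j Z^m| ≤ |z_j| · |z_k Z^a| · |z_l Z^b|,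 where Z^m = Π_{i≠j}(z_i z̄_j)^{m_{ij}}. -/
/-!
Fold the exponents `m` onto the pairs `i < j`: this keeps `|m|` (the diagonal is empty) and can
only lower the exponent with which each `|z_i|` occurs in `|Z^m| = ∏ᵢ |z_i|^{Σⱼ (m_{ij} + m_{ji})}`.
From the folded multi-index remove one unit at a pair `(k, l)`, accounting for the factor
`|z_k| |z_l|`, and split the remaining `≥ 2N+2` units into `a` and `b` of size `N+1`. Since
`|z_i| ≤ 1`, lowering exponents only increases the modulus, which gives the estimate. Every unit of
`a` contributes `e_i - e_j ≤ -|e_1| / N`, so `N+1` of them outweigh `-e_k ≤ |e_1|`.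
-/

open Finset ComplexConjugate

section Combinatorics

variable {α : Type*} [Fintype α]

theorem exists_le_sum_eq (f : α → ℕ) {K : ℕ} (hK : K ≤ ∑ x, f x) :
    ∃ g ≤ f, ∑ x, g x = K := by
  classical
  induction K with
  | zero => exact ⟨0, zero_le, by simp⟩
  | succ K ih =>
    obtain ⟨g, hgf, hg⟩ := ih (by omega)
    obtain ⟨p, hp⟩ : ∃ p, g p < f p := by
      by_contra! h
      have := sum_le_sum fun x (_ : x ∈ univ) => h x
      omega
    refine ⟨g + Pi.single p 1, fun x => ?_, by simp [sum_add_distrib, hg]⟩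
    rcases eq_or_ne x p with rfl | hx
    · simpa using hp
    · simpa [hx] using hgf x

theorem exists_add_le_sum_eq (f : α → ℕ) {K L : ℕ} (hKL : K + L ≤ ∑ x, f x) :
    ∃ g h : α → ℕ, g + h ≤ f ∧ ∑ x, g x = K ∧ ∑ x, h x = L := by
  obtain ⟨g, hgf, hg⟩ := exists_le_sum_eq f (K := K) (by omega)
  obtain ⟨h, hh, hhs⟩ := exists_le_sum_eq (f - g) (K := L) (by
    rw [Pi.sub_def, sum_tsub_distrib _ fun x _ => hgf x]; omega)
  exact ⟨g, h, by simpa [add_comm] using (le_tsub_iff_right hgf).1 hh, hg, hhs⟩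

theorem exists_add_add_single_le [DecidableEq α] (f : α → ℕ) {K L : ℕ}
    (hKL : K + L < ∑ x, f x) :
    ∃ g h : α → ℕ, ∃ p, g + h + Pi.single p 1 ≤ f ∧ ∑ x, g x = K ∧ ∑ x, h x = L := by
  obtain ⟨p, -, hp⟩ := exists_ne_zero_of_sum_ne_zero (s := univ) (f := f) (by omega)
  have hpf : Pi.single p 1 ≤ f := by
    intro x
    rcases eq_or_ne x p with rfl | hx
    · simpa using Nat.one_le_iff_ne_zero.2 hp
    · simp [hx]
  have hsum : K + L ≤ ∑ x, (f x - (Pi.single p 1 : α → ℕ) x) := by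
    rw [sum_tsub_distrib _ fun x _ => hpf x, sum_pi_single', if_pos (mem_univ p)]
    omega
  obtain ⟨g, h, hgh, hg, hh⟩ := exists_add_le_sum_eq (f - Pi.single p 1) hsum
  exact ⟨g, h, p, (le_tsub_iff_right hpf).1 hgh, hg, hh⟩

theorem exists_add_add_single_le₂ [DecidableEq α] (M : α → α → ℕ) {K L : ℕ}
    (hKL : K + L < ∑ i, ∑ j, M i j) :
    ∃ a b : α → α → ℕ, ∃ k l, a + b + Pi.single k (Pi.single l 1) ≤ M ∧
      ∑ i, ∑ j, a i j = K ∧ ∑ i, ∑ j, b i j = L := by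
  obtain ⟨g, h, ⟨k, l⟩, hle, hg, hh⟩ :=
    exists_add_add_single_le (Function.uncurry M) (hKL.trans_eq (Fintype.sum_prod_type' M).symm)
  rw [← Pi.uncurry_single_single] at hle
  refine ⟨Function.curry g, Function.curry h, k, l, fun i j => hle (i, j), ?_, ?_⟩
  · rwa [← Fintype.sum_prod_type']
  · rwa [← Fintype.sum_prod_type']

end Combinatorics

section Folding

variable {ι : Type*} [LinearOrder ι]

def upperFold (m : ι → ι → ℕ) (i j : ι) : ℕ := if i < j then m i j + m j i else 0

theorem upperFold_add_upperFold_le (m : ι → ι → ℕ) (i j : ι) :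
    upperFold m i j + upperFold m j i ≤ m i j + m j i := by
  rcases lt_trichotomy i j with h | rfl | h
  · simp [upperFold, h, h.not_gt]
  · simp [upperFold]
  · simp [upperFold, h, h.not_gt, add_comm]

theorem eq_zero_of_le_upperFold {m c : ι → ι → ℕ} (hc : c ≤ upperFold m) {i j : ι}
    (hij : ¬ i < j) : c i j = 0 := by
  simpa [upperFold, hij] using hc i j

theorem sum_upperFold [Fintype ι] {m : ι → ι → ℕ} (hdiag : ∀ i, m i i = 0) :
    ∑ i, ∑ j, upperFold m i j = ∑ i, ∑ j, m i j := by
  have hswap : ∑ i, ∑ j, (if i < j then m j i else 0) = ∑ i, ∑ j, (if j < i then m i j else 0) :=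
    sum_comm
  simp only [upperFold, ite_add_zero, sum_add_distrib, hswap]
  simp only [← sum_add_distrib]
  refine sum_congr rfl fun i _ => sum_congr rfl fun j _ => ?_
  rcases lt_trichotomy i j with h | rfl | h
  · simp [h, h.not_gt]
  · simp [hdiag]
  · simp [h, h.not_gt]

end Folding

section Monomials

variable {ι : Type*} [Fintype ι]

def zMonomial (z : ι → ℂ) (f : ι → ι → ℕ) : ℂ := ∏ i, ∏ j, (z i * conj (z j)) ^ f i j

def zDegree (f : ι → ι → ℕ) (i : ι) : ℕ := ∑ j, (f i j + f j i)

theorem zMonomial_add (z : ι → ℂ) (f g : ι → ι → ℕ) :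
    zMonomial z (f + g) = zMonomial z f * zMonomial z g := by
  simp only [zMonomial, Pi.add_apply, pow_add, prod_mul_distrib]

theorem zMonomial_single [DecidableEq ι] (z : ι → ℂ) (k l : ι) :
    zMonomial z (Pi.single k (Pi.single l 1)) = z k * conj (z l) := by
  rw [zMonomial, prod_eq_single k (fun i _ hi => by simp [hi]) (by simp),
    prod_eq_single l (fun j _ hj => by simp [hj]) (by simp)]
  simp

theorem norm_zMonomial (z : ι → ℂ) (f : ι → ι → ℕ) :
    ‖zMonomial z f‖ = ∏ i, ‖z i‖ ^ zDegree f i := by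
  simp only [zMonomial, zDegree, norm_prod, norm_pow, norm_mul, Complex.norm_conj, mul_pow,
    prod_mul_distrib, sum_add_distrib, pow_add, prod_pow_eq_pow_sum]
  rw [prod_comm (f := fun i j => ‖z j‖ ^ f i j)]
  simp only [prod_pow_eq_pow_sum]

theorem zDegree_le_zDegree {f g : ι → ι → ℕ} (h : ∀ i j, f i j + f j i ≤ g i j + g j i) :
    zDegree f ≤ zDegree g := fun i => sum_le_sum fun j _ => h i j

theorem norm_zMonomial_le_of_zDegree_le {z : ι → ℂ} (hz : ∀ i, ‖z i‖ ≤ 1)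
    {f g : ι → ι → ℕ} (h : zDegree f ≤ zDegree g) :
    ‖zMonomial z g‖ ≤ ‖zMonomial z f‖ := by
  rw [norm_zMonomial, norm_zMonomial]
  exact prod_le_prod (fun i _ => by positivity) fun i _ =>
    pow_le_pow_of_le_one (norm_nonneg _) (hz i) (h i)

end Monomials

section Resonance

variable {ι : Type*} [Fintype ι] [LinearOrder ι]

theorem mul_sum_mul_sub_le {e : ι → ℝ} {t A : ℝ} (hA : ∀ i j, i < j → A ≤ t * (e j - e i))
    {c : ι → ι → ℕ} (hc : ∀ i j, ¬ i < j → c i j = 0) :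
    t * ∑ i, ∑ j, (c i j : ℝ) * (e i - e j) ≤ -((∑ i, ∑ j, c i j : ℕ) : ℝ) * A := by
  push_cast
  simp only [mul_sum, neg_mul, ← sum_neg_distrib, sum_mul]
  refine sum_le_sum fun i _ => sum_le_sum fun j _ => ?_
  by_cases hij : i < j
  · nlinarith [hA i j hij, (c i j).cast_nonneg (α := ℝ)]
  · simp [hc i j hij]

theorem sum_mul_sub_sub_neg {e : ι → ℝ} {i₀ : ι} (hmin : ∀ k, e i₀ ≤ e k) (hneg : e i₀ < 0)
    {N : ℕ} (hN : ∀ i j, i < j → |e i₀| ≤ N * (e j - e i))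
    {c : ι → ι → ℕ} (hc : ∀ i j, ¬ i < j → c i j = 0) (hcN : ∑ i, ∑ j, c i j = N + 1) (k : ι) :
    ∑ i, ∑ j, (c i j : ℝ) * (e i - e j) - e k < 0 := by
  have hsum := mul_sum_mul_sub_le hN hc
  rw [hcN, abs_of_neg hneg] at hsum
  push_cast at hsum
  have hk : (N : ℝ) * e i₀ ≤ N * e k := mul_le_mul_of_nonneg_left (hmin k) N.cast_nonneg
  refine neg_of_mul_neg_right (a := (N : ℝ)) ?_ N.cast_nonneg
  nlinarith

end Resonance

/-- Splitting of a large monomial `z_{j₀} Z^m` with `|m| ≥ 2N+3` into a product dominated by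
`|z_{j₀}| |z_k Z^a| |z_l Z^b|` with `a, b` supported on pairs `i < j`, of length `N+1`, and
satisfying the resonance inequalities. -/
theorem stmt3 (n : ℕ) (hn : 0 < n) (e : Fin n → ℝ) (N : ℕ)
    (hmono : ∀ i j : Fin n, i < j → e i < e j)
    (hneg : ∀ j, e j < 0)
    (hN : ∀ i j : Fin n, i < j → |e ⟨0, hn⟩| < (N : ℝ) * (e j - e i))
    (m : Fin n → Fin n → ℕ) (hdiag : ∀ i, m i i = 0)
    (hsum : 2 * N + 3 ≤ ∑ i, ∑ j, m i j) (j₀ : Fin n) :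
    ∃ a b : Fin n → Fin n → ℕ, ∃ k l : Fin n,
      (∀ i j : Fin n, ¬ i < j → a i j = 0) ∧
      (∀ i j : Fin n, ¬ i < j → b i j = 0) ∧
      (∑ i, ∑ j, a i j) = N + 1 ∧ (∑ i, ∑ j, b i j) = N + 1 ∧
      (∀ i j : Fin n, i < j → a i j + b i j ≤ m i j + m j i) ∧
      (∑ i, ∑ j, (a i j : ℝ) * (e i - e j)) - e k < 0 ∧
      (∑ i, ∑ j, (b i j : ℝ) * (e i - e j)) - e l < 0 ∧
      ∀ z : EuclideanSpace ℂ (Fin n), ‖z‖ ≤ 1 →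
        ‖z j₀ * ∏ i, ∏ j, (z i * (starRingEnd ℂ) (z j)) ^ (m i j)‖
          ≤ ‖z j₀‖
            * ‖z k * ∏ i, ∏ j, (z i * (starRingEnd ℂ) (z j)) ^ (a i j)‖
            * ‖z l * ∏ i, ∏ j, (z i * (starRingEnd ℂ) (z j)) ^ (b i j)‖ := by
  obtain ⟨a, b, k, l, hle, ha, hb⟩ := exists_add_add_single_le₂ (upperFold m)
    (K := N + 1) (L := N + 1) (by rw [sum_upperFold hdiag]; omega)
  have haM : a ≤ upperFold m := le_trans le_self_add (le_trans le_self_add hle)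
  have hbM : b ≤ upperFold m := le_trans le_add_self (le_trans le_self_add hle)
  have hmin : ∀ k, e ⟨0, hn⟩ ≤ e k := fun k =>
    StrictMono.monotone (fun i j h => hmono i j h) (Fin.le_def.2 k.val.zero_le)
  have hgap : ∀ i j, i < j → |e ⟨0, hn⟩| ≤ N * (e j - e i) := fun i j h => (hN i j h).le
  refine ⟨a, b, k, l, fun i j => eq_zero_of_le_upperFold haM,
    fun i j => eq_zero_of_le_upperFold hbM, ha, hb, fun i j hij => ?_,
    sum_mul_sub_sub_neg hmin (hneg _) hgap (fun i j => eq_zero_of_le_upperFold haM) ha k,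
    sum_mul_sub_sub_neg hmin (hneg _) hgap (fun i j => eq_zero_of_le_upperFold hbM) hb l,
    fun z hz => ?_⟩
  · simpa [upperFold, hij] using le_trans le_self_add (hle i j)
  · have hz₁ : ∀ i, ‖z i‖ ≤ 1 := fun i => (PiLp.norm_apply_le z i).trans hz
    have hdeg : zDegree (a + b + Pi.single k (Pi.single l 1)) ≤ zDegree m :=
      zDegree_le_zDegree fun i j =>
        (add_le_add (hle i j) (hle j i)).trans (upperFold_add_upperFold_le m i j)
    change ‖z j₀ * zMonomial z m‖ ≤ ‖z j₀‖ * ‖z k * zMonomial z a‖ * ‖z l * zMonomial z b‖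
    calc ‖z j₀ * zMonomial z m‖
        ≤ ‖z j₀‖ * ‖zMonomial z (a + b + Pi.single k (Pi.single l 1))‖ := by
          rw [norm_mul]
          gcongr
          exact norm_zMonomial_le_of_zDegree_le hz₁ hdeg
      _ = ‖z j₀‖ * ‖z k * zMonomial z a‖ * ‖z l * zMonomial z b‖ := by
          simp only [zMonomial_add, zMonomial_single, norm_mul, Complex.norm_conj]
          ring
end

section
/- Let a : B(0,δ) ⊂ ℂ → ℝ be a smooth (C^∞) function satisfying a(e^{iθ}z) = a(z) for all θ ∈ ℝ and all z. Then there exists a smooth function α : [0, δ²) → ℝ such that a(z) = α(|z|²) for all z ∈ B(0,δ). -/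
/-!
On the real axis `a` restricts to a smooth function `f` on `(-δ, δ)`, which is even by gauge
invariance with `θ = π`, and `a z = f ‖z‖` by gauge invariance with `θ = arg z`; so `α t = f √t`
works, and its smoothness is Whitney's theorem. Multiplying by an even cutoff reduces this to `f`
smooth and even on all of `ℝ`. Then `f'` is odd, so Hadamard's lemma gives `f' r = r * k r` with
`k r = ∫₀¹ f''(s r) ds` smooth and even. Hence `(f ∘ √)' = (k ∘ √) / 2` on `[0, ∞)`, at `0`
because the right-hand side extends continuously there, and induction on the order of
differentiability shows that `f ∘ √` is `C^n` for every `n`.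
-/

open Set Filter Topology intervalIntegral
open scoped ContDiff

noncomputable def hadamardIntegral (φ : ℝ → ℝ) (m : ℕ) (r : ℝ) : ℝ :=
  ∫ s in (0 : ℝ)..1, s ^ m * φ (s * r)

lemma continuous_hadamardIntegral {φ : ℝ → ℝ} (hφ : Continuous φ) (m : ℕ) :
    Continuous (hadamardIntegral φ m) :=
  continuous_parametric_intervalIntegral_of_continuous' (by fun_prop) 0 1

lemma hasDerivAt_hadamardIntegral {φ : ℝ → ℝ} (hφ : ContDiff ℝ 1 φ) (m : ℕ) (x₀ : ℝ) :
    HasDerivAt (hadamardIntegral φ m) (hadamardIntegral (deriv φ) (m + 1) x₀) x₀ := by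
  obtain ⟨hφd, hφ'⟩ := contDiff_one_iff_deriv.mp hφ
  obtain ⟨C, hC⟩ := (isCompact_closedBall (0 : ℝ) (|x₀| + 1)).exists_bound_of_continuousOn
    hφ'.continuousOn
  refine (hasDerivAt_integral_of_dominated_loc_of_deriv_le (μ := MeasureTheory.volume)
    (F := fun x s => s ^ m * φ (s * x)) (F' := fun x s => s ^ (m + 1) * deriv φ (s * x))
    (bound := fun _ => C) (Metric.ball_mem_nhds x₀ zero_lt_one)
    (Eventually.of_forall fun x => (by fun_prop : Continuous _).aestronglyMeasurable)
    ((by fun_prop : Continuous _).intervalIntegrable 0 1)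
    (by fun_prop : Continuous _).aestronglyMeasurable
    (Eventually.of_forall fun s hs x hx => ?_) intervalIntegrable_const
    (Eventually.of_forall fun s _ x _ => ?_)).2
  · rw [uIoc_of_le zero_le_one] at hs
    have hs1 : ‖s‖ ≤ 1 := by rw [Real.norm_of_nonneg hs.1.le]; exact hs.2
    have hx1 : ‖x‖ ≤ |x₀| + 1 := by
      have := norm_sub_norm_le x x₀
      rw [Metric.mem_ball, dist_eq_norm] at hx
      rw [Real.norm_eq_abs x₀] at this
      linarith
    have hsx : s * x ∈ Metric.closedBall (0 : ℝ) (|x₀| + 1) := by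
      rw [mem_closedBall_zero_iff, norm_mul]
      nlinarith [norm_nonneg s, norm_nonneg x]
    calc ‖s ^ (m + 1) * deriv φ (s * x)‖ ≤ 1 * C := by
          rw [norm_mul, norm_pow]
          exact mul_le_mul (pow_le_one₀ (norm_nonneg _) hs1) (hC _ hsx) (norm_nonneg _) zero_le_one
      _ = C := one_mul C
  · exact (((hφd (s * x)).hasDerivAt.comp x ((hasDerivAt_id x).const_mul s)).const_mul
      (s ^ m)).congr_deriv (by ring)

lemma contDiff_hadamardIntegral {n : ℕ∞} {φ : ℝ → ℝ} (hφ : ContDiff ℝ n φ) (m : ℕ) :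
    ContDiff ℝ n (hadamardIntegral φ m) := by
  have hnat : ∀ n : ℕ, ∀ {φ : ℝ → ℝ}, ContDiff ℝ n φ → ∀ m,
      ContDiff ℝ n (hadamardIntegral φ m) := by
    intro n
    induction n with
    | zero => exact fun hφ m =>
        contDiff_zero.mpr (continuous_hadamardIntegral (contDiff_zero.mp hφ) m)
    | succ n ih =>
      intro φ hφ m
      rw [Nat.cast_succ] at hφ ⊢
      have hφ1 : ContDiff ℝ 1 φ := hφ.of_le le_add_self
      have hderiv : deriv (hadamardIntegral φ m) = hadamardIntegral (deriv φ) (m + 1) :=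
        funext fun x => (hasDerivAt_hadamardIntegral hφ1 m x).deriv
      refine contDiff_succ_iff_deriv.mpr
        ⟨fun x => (hasDerivAt_hadamardIntegral hφ1 m x).differentiableAt, by simp, ?_⟩
      rw [hderiv]
      exact ih (contDiff_succ_iff_deriv.mp hφ).2.2 (m + 1)
  cases n with
  | top => exact contDiff_infty.mpr fun k => hnat k (hφ.of_le (by exact_mod_cast le_top)) m
  | coe n => exact hnat n hφ m

lemma even_hadamardIntegral {φ : ℝ → ℝ} (hφ : φ.Even) (m : ℕ) :
    (hadamardIntegral φ m).Even := by
  intro r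
  simp only [hadamardIntegral, mul_neg, hφ.eq]

lemma eq_add_mul_hadamardIntegral {φ : ℝ → ℝ} (hφ : ContDiff ℝ 1 φ) (r : ℝ) :
    φ r = φ 0 + r * hadamardIntegral (deriv φ) 0 r := by
  obtain ⟨hφd, hφ'⟩ := contDiff_one_iff_deriv.mp hφ
  rcases eq_or_ne r 0 with rfl | hr
  · simp
  · have hFTC : ∫ u in (0 : ℝ)..r, deriv φ u = φ r - φ 0 :=
      integral_deriv_eq_sub' φ rfl (fun x _ => hφd x) hφ'.continuousOn
    have := integral_comp_mul_right (deriv φ) hr (a := 0) (b := 1)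
    simp only [zero_mul, one_mul] at this
    simp only [hadamardIntegral, pow_zero, one_mul, this, hFTC, smul_eq_mul]
    field_simp
    ring

lemma Function.Even.deriv_odd {f : ℝ → ℝ} (hf : f.Even) : (deriv f).Odd := by
  intro r
  have h := deriv_comp_neg (f := f) (-r)
  simp only [neg_neg, show (fun x => f (-x)) = f from funext hf.eq] at h
  linarith

lemma Function.Odd.deriv_even {f : ℝ → ℝ} (hf : f.Odd) : (deriv f).Even := by
  intro r
  have h := deriv_comp_neg (f := f) r
  rw [show (fun x => f (-x)) = fun x => -f x from funext hf.eq, deriv.fun_neg] at h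
  linarith

lemma Function.Even.exists_deriv_eq_mul {g : ℝ → ℝ} (hg : ContDiff ℝ ∞ g) (he : g.Even) :
    ∃ k : ℝ → ℝ, ContDiff ℝ ∞ k ∧ k.Even ∧ ∀ r, deriv g r = r * k r := by
  have hg' : ContDiff ℝ ∞ (deriv g) := (contDiff_infty_iff_deriv.mp hg).2
  refine ⟨hadamardIntegral (deriv (deriv g)) 0,
    contDiff_hadamardIntegral (contDiff_infty_iff_deriv.mp hg').2 0,
    even_hadamardIntegral he.deriv_odd.deriv_even 0, fun r => ?_⟩
  rw [eq_add_mul_hadamardIntegral (hg'.of_le (by exact_mod_cast le_top)) r,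
    he.deriv_odd.map_zero, zero_add]

section CompSqrt

variable {g k : ℝ → ℝ}

lemma hasDerivAt_comp_sqrt_of_pos (hg : Differentiable ℝ g) (hgk : ∀ r, deriv g r = r * k r)
    {t : ℝ} (ht : 0 < t) : HasDerivAt (fun t => g √t) (k √t / 2) t := by
  have hsqrt : √t ≠ 0 := (Real.sqrt_pos.mpr ht).ne'
  refine ((hg √t).hasDerivAt.comp t (Real.hasDerivAt_sqrt ht.ne')).congr_deriv ?_
  rw [hgk]
  field_simp

lemma hasDerivWithinAt_comp_sqrt (hg : Differentiable ℝ g) (hk : Continuous k)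
    (hgk : ∀ r, deriv g r = r * k r) {t : ℝ} (ht : 0 ≤ t) :
    HasDerivWithinAt (fun t => g √t) (k √t / 2) (Ici 0) t := by
  rcases ht.eq_or_lt with rfl | ht
  · have hderiv : ∀ x ∈ Ioi (0 : ℝ), deriv (fun t => g √t) x = k √x / 2 :=
      fun x hx => (hasDerivAt_comp_sqrt_of_pos hg hgk hx).deriv
    refine hasDerivWithinAt_Ici_of_tendsto_deriv
      (fun x hx => (hasDerivAt_comp_sqrt_of_pos hg hgk hx).differentiableAt.differentiableWithinAt)
      (hg.continuous.comp Real.continuous_sqrt).continuousWithinAt self_mem_nhdsWithin ?_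
    refine Tendsto.congr' (eventuallyEq_nhdsWithin_of_eqOn fun x hx => (hderiv x hx).symm) ?_
    exact (((hk.comp Real.continuous_sqrt).div_const 2).tendsto 0).mono_left nhdsWithin_le_nhds
  · exact (hasDerivAt_comp_sqrt_of_pos hg hgk ht).hasDerivWithinAt

end CompSqrt

theorem contDiffOn_comp_sqrt_of_even {g : ℝ → ℝ} (hg : ContDiff ℝ ∞ g) (he : g.Even) :
    ContDiffOn ℝ ∞ (fun t => g √t) (Ici 0) := by
  suffices ∀ n : ℕ, ∀ {g : ℝ → ℝ}, ContDiff ℝ ∞ g → g.Even →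
      ContDiffOn ℝ n (fun t => g √t) (Ici 0) from
    contDiffOn_infty.mpr fun n => this n hg he
  intro n
  induction n with
  | zero => exact fun hg _ =>
      contDiffOn_zero.mpr (hg.continuous.comp Real.continuous_sqrt).continuousOn
  | succ n ih =>
    intro g hg he
    obtain ⟨k, hk, hke, hgk⟩ := he.exists_deriv_eq_mul hg
    have hd := fun t (ht : t ∈ Ici (0 : ℝ)) =>
      hasDerivWithinAt_comp_sqrt (hg.differentiable (by simp)) hk.continuous hgk ht
    rw [Nat.cast_succ, contDiffOn_succ_iff_derivWithin (uniqueDiffOn_Ici 0)]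
    refine ⟨fun t ht => (hd t ht).differentiableWithinAt, by simp, ?_⟩
    exact ((ih hk hke).div_const 2).congr fun t ht =>
      (hd t ht).derivWithin (uniqueDiffOn_Ici 0 t ht)

lemma exists_even_cutoff {ρ R : ℝ} (hρ : 0 ≤ ρ) (hρR : ρ < R) :
    ∃ χ : ℝ → ℝ, ContDiff ℝ ∞ χ ∧ χ.Even ∧ (∀ r, |r| ≤ ρ → χ r = 1) ∧
      ∀ r, R ≤ |r| → χ r = 0 := by
  have hgap : 0 < R ^ 2 - ρ ^ 2 := by nlinarith
  refine ⟨fun r => Real.smoothTransition ((R ^ 2 - r ^ 2) / (R ^ 2 - ρ ^ 2)),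
    Real.smoothTransition.contDiff.comp (by fun_prop), fun r => by simp only [neg_sq],
    fun r hr => Real.smoothTransition.one_of_one_le ?_,
    fun r hr => Real.smoothTransition.zero_of_nonpos ?_⟩
  · rw [le_div_iff₀ hgap, one_mul, ← sq_abs r]
    nlinarith [abs_nonneg r]
  · refine div_nonpos_of_nonpos_of_nonneg ?_ hgap.le
    rw [← sq_abs r]
    nlinarith

lemma exists_contDiff_even_eq_of_contDiffOn {f : ℝ → ℝ} {δ ρ : ℝ}
    (hf : ContDiffOn ℝ ∞ f (Ioo (-δ) δ)) (he : ∀ r ∈ Ioo (-δ) δ, f (-r) = f r)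
    (hρ : 0 ≤ ρ) (hρδ : ρ < δ) :
    ∃ g : ℝ → ℝ, ContDiff ℝ ∞ g ∧ g.Even ∧ ∀ r, |r| ≤ ρ → g r = f r := by
  obtain ⟨R, hρR, hRδ⟩ := exists_between hρδ
  obtain ⟨χ, hχ, hχe, hχ1, hχ0⟩ := exists_even_cutoff hρ hρR
  refine ⟨fun r => χ r * f r, contDiff_iff_contDiffAt.mpr fun r => ?_, fun r => ?_,
    fun r hr => by simp [hχ1 r hr]⟩
  · by_cases hr : |r| < δ
    · exact hχ.contDiffAt.mul (hf.contDiffAt (Ioo_mem_nhds (by linarith [neg_abs_le r])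
        (by linarith [le_abs_self r])))
    · refine (contDiffAt_const (c := (0 : ℝ))).congr_of_eventuallyEq ?_
      filter_upwards [(isOpen_lt continuous_const continuous_abs).mem_nhds
        (show R < |r| by linarith)] with r' hr'
      simp [hχ0 r' (le_of_lt hr')]
  · by_cases hr : |r| < δ
    · simp only [hχe.eq, he r (abs_lt.mp hr)]
    · simp [hχe.eq, hχ0 r (by linarith [not_lt.mp hr])]

theorem contDiffOn_comp_sqrt_of_contDiffOn_of_even {f : ℝ → ℝ} {δ : ℝ} (hδ : 0 < δ)
    (hf : ContDiffOn ℝ ∞ f (Ioo (-δ) δ)) (he : ∀ r ∈ Ioo (-δ) δ, f (-r) = f r) :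
    ContDiffOn ℝ ∞ (fun t => f √t) (Ico 0 (δ ^ 2)) := by
  rintro x ⟨hx0, hxδ⟩
  have hsqrt : √x < δ := (Real.sqrt_lt' hδ).mpr hxδ
  obtain ⟨ρ, hxρ, hρδ⟩ := exists_between hsqrt
  have hρ : 0 < ρ := (Real.sqrt_nonneg x).trans_lt hxρ
  obtain ⟨g, hg, hge, hgf⟩ := exists_contDiff_even_eq_of_contDiffOn hf he hρ.le hρδ
  have hfg : ∀ t, √t < ρ → f √t = g √t := fun t ht =>
    (hgf √t (by rw [abs_of_nonneg (Real.sqrt_nonneg t)]; exact ht.le)).symm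
  refine ((contDiffOn_comp_sqrt_of_even hg hge x hx0).mono
    Ico_subset_Ici_self).congr_of_eventuallyEq ?_ (hfg x hxρ)
  filter_upwards [nhdsWithin_le_nhds (Iio_mem_nhds ((Real.sqrt_lt' hρ).mp hxρ))] with t ht
  exact hfg t ((Real.sqrt_lt' hρ).mpr ht)

/-- A smooth gauge-invariant function on a disc is a smooth function of `|z|²`. -/
theorem stmt4 (δ : ℝ) (hδ : 0 < δ) (a : ℂ → ℝ)
    (hsmooth : ContDiffOn ℝ (⊤ : ℕ∞) a (Metric.ball 0 δ))
    (hgauge : ∀ θ : ℝ, ∀ z ∈ Metric.ball (0 : ℂ) δ,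
      a (Complex.exp (θ * Complex.I) * z) = a z) :
    ∃ α : ℝ → ℝ, ContDiffOn ℝ (⊤ : ℕ∞) α (Set.Ico 0 (δ ^ 2)) ∧
      ∀ z ∈ Metric.ball (0 : ℂ) δ, a z = α (‖z‖ ^ 2) := by
  have hball : ∀ r : ℝ, (r : ℂ) ∈ Metric.ball (0 : ℂ) δ ↔ r ∈ Ioo (-δ) δ := fun r => by
    rw [mem_ball_zero_iff, Complex.norm_real, Real.norm_eq_abs, abs_lt, mem_Ioo]
  have hsmoothR : ContDiffOn ℝ ∞ (fun r : ℝ => a r) (Ioo (-δ) δ) :=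
    hsmooth.comp Complex.ofRealCLM.contDiff.contDiffOn fun r hr => (hball r).mpr hr
  have hevenR : ∀ r ∈ Ioo (-δ) δ, a ↑(-r) = a r := fun r hr => by
    simpa [Complex.exp_pi_mul_I] using hgauge Real.pi r ((hball r).mpr hr)
  refine ⟨fun t => a ↑√t, contDiffOn_comp_sqrt_of_contDiffOn_of_even hδ hsmoothR hevenR,
    fun z hz => ?_⟩
  have hnorm : ((‖z‖ : ℝ) : ℂ) ∈ Metric.ball (0 : ℂ) δ :=
    (hball _).mpr (abs_lt.mp (by rwa [abs_norm, ← mem_ball_zero_iff]))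
  dsimp only
  rw [Real.sqrt_sq (norm_nonneg z), ← hgauge z.arg _ hnorm, mul_comm,
    Complex.norm_mul_exp_arg_mul_I]
end

section
/- Let e = (e_1, ..., e_n) be real numbers and let M_L be a finite set of pairs (μ,ν) ∈ ℕ^n × ℕ^n with (ν − μ)·e = L for a fixed L ∈ ℝ. Let H be a self-adjoint operator and for each (μ,ν) ∈ M_L let G_{μν} be a vector; write ⟨·,·⟩ for the bilinear pairing. Then for every ζ ∈ ℂ^n the principal-value contributions cancel: Im[ Σ_{(μ,ν),(α,β) ∈ M_L} (ν·e) ζ^{μ+β} ζ̄^{ν+α} ⟨P.V.(H−L)^{−1} Ḡ_{αβ}, G_{μν}⟩ + Σ_{(μ',ν'),(α',β') ∈ M_L} (μ'·e) ζ^{ν'+α'} ζ̄^{μ'+β'} ⟨P.V.(H−L)^{−1} G_{α'β'}, Ḡ_{μ'ν'}⟩ ] = 0. -/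
/-!
Write `z p q` for the summand `ζ^(μ+β) ζ̄^(ν+α) ⟨R Ḡ_q, G_p⟩` of the first double sum. Since `R` is
real, the summand of the second double sum is `(μ·e) · conj (z p q)`, so the whole expression has
imaginary part `∑ (ν·e − μ·e) Im (z p q) = L · Im ∑ z p q`. Symmetry of `R` and of the pairing give
`z q p = conj (z p q)`, hence `∑ z p q` is real.
-/

open ComplexConjugate

theorem Complex.im_sum_sum_eq_zero_of_conj_swap {ι : Type*} (S : Finset ι) (z : ι → ι → ℂ)
    (hz : ∀ p ∈ S, ∀ q ∈ S, z q p = conj (z p q)) :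
    (∑ p ∈ S, ∑ q ∈ S, z p q).im = 0 := by
  rw [← Complex.conj_eq_iff_im, map_sum]
  simp_rw [map_sum]
  calc ∑ p ∈ S, ∑ q ∈ S, conj (z p q) = ∑ p ∈ S, ∑ q ∈ S, z q p :=
        Finset.sum_congr rfl fun p hp => Finset.sum_congr rfl fun q hq => (hz p hp q hq).symm
    _ = ∑ p ∈ S, ∑ q ∈ S, z p q := Finset.sum_comm

theorem Complex.im_ofReal_mul_add_ofReal_mul_conj (a b : ℝ) (z : ℂ) :
    ((a : ℂ) * z + (b : ℂ) * conj z).im = (a - b) * z.im := by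
  simp only [Complex.add_im, Complex.im_ofReal_mul, Complex.conj_im]
  ring

theorem Complex.im_sum_sum_ofReal_mul_add_conj_eq_zero {ι : Type*} (S : Finset ι) (a b : ι → ℝ)
    (L : ℝ) (hab : ∀ p ∈ S, a p - b p = L) (z : ι → ι → ℂ)
    (hz : ∀ p ∈ S, ∀ q ∈ S, z q p = conj (z p q)) :
    (∑ p ∈ S, ∑ q ∈ S, (a p : ℂ) * z p q + ∑ p ∈ S, ∑ q ∈ S, (b p : ℂ) * conj (z p q)).im = 0 := by
  calc _ = ∑ p ∈ S, ∑ q ∈ S, (a p - b p) * (z p q).im := by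
        simp only [← Finset.sum_add_distrib, Complex.im_sum,
          Complex.im_ofReal_mul_add_ofReal_mul_conj]
    _ = L * (∑ p ∈ S, ∑ q ∈ S, z p q).im := by
        simp only [Complex.im_sum, Finset.mul_sum]
        exact Finset.sum_congr rfl fun p hp => by rw [hab p hp]
    _ = 0 := by rw [Complex.im_sum_sum_eq_zero_of_conj_swap S z hz, mul_zero]

/-- Cancellation of the principal-value contributions in the Fermi Golden Rule computation:
for pairs in `M_L` (i.e. `(ν−μ)·e = L`), a symmetric bilinear pairing, and a symmetric
"real" operator `R = P.V.(H−L)⁻¹`, the imaginary part of the combined double sums vanishes. -/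
theorem stmt9 {n : ℕ} {V : Type*}
    (e : Fin n → ℝ) (L : ℝ)
    (S : Finset ((Fin n → ℕ) × (Fin n → ℕ)))
    (hS : ∀ p ∈ S, (∑ j, ((p.2 j : ℝ) - (p.1 j : ℝ)) * e j) = L)
    (pair : V → V → ℂ) (hsymm : ∀ f g : V, pair f g = pair g f)
    (R : V → V) (conjV : V → V)
    (hRsym : ∀ f g : V, pair (R f) g = pair f (R g))
    (hRconj : ∀ f g : V, (starRingEnd ℂ) (pair (R (conjV f)) g) = pair (R f) (conjV g))
    (G : (Fin n → ℕ) × (Fin n → ℕ) → V) (ζ : Fin n → ℂ) :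
    ((∑ p ∈ S, ∑ q ∈ S,
        ((∑ j, (p.2 j : ℝ) * e j : ℝ) : ℂ)
          * (∏ j, ζ j ^ (p.1 j + q.2 j))
          * (∏ j, (starRingEnd ℂ) (ζ j) ^ (p.2 j + q.1 j))
          * pair (R (conjV (G q))) (G p))
      + ∑ p ∈ S, ∑ q ∈ S,
        ((∑ j, (p.1 j : ℝ) * e j : ℝ) : ℂ)
          * (∏ j, ζ j ^ (p.2 j + q.1 j))
          * (∏ j, (starRingEnd ℂ) (ζ j) ^ (p.1 j + q.2 j))
          * pair (R (G q)) (conjV (G p))).im = 0 := by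
  set z : (Fin n → ℕ) × (Fin n → ℕ) → (Fin n → ℕ) × (Fin n → ℕ) → ℂ := fun p q =>
    (∏ j, ζ j ^ (p.1 j + q.2 j)) * (∏ j, conj (ζ j) ^ (p.2 j + q.1 j))
      * pair (R (conjV (G q))) (G p)
  have hconj : ∀ p q, conj (z p q) = (∏ j, ζ j ^ (p.2 j + q.1 j))
      * (∏ j, conj (ζ j) ^ (p.1 j + q.2 j)) * pair (R (G q)) (conjV (G p)) := fun p q => by
    simp only [z, map_mul, map_prod, map_pow, Complex.conj_conj, hRconj]
    ring
  have hswap : ∀ p q, z q p = conj (z p q) := fun p q => by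
    rw [hconj, hRsym, hsymm]
    simp only [z, add_comm]
  have hL : ∀ p ∈ S, ∑ j, (p.2 j : ℝ) * e j - ∑ j, (p.1 j : ℝ) * e j = L := fun p hp => by
    simpa only [sub_mul, Finset.sum_sub_distrib] using hS p hp
  have h := Complex.im_sum_sum_ofReal_mul_add_conj_eq_zero S _ _ L hL z fun p _ q _ => hswap p q
  simp only [hconj] at h
  simpa only [z, mul_assoc] using h
end

section
/- Let γ : (−a,a) → ℝ be smooth and define the 1-form on ℂ \ {0} ≅ ℝ² (in coordinates z = z_R + i z_I, with q(z) = z q̂(|z|²) for a smooth Σ_r-valued q̂): b := −Im⟨D_{z_R} q̄(z), q(z)⟩ dz_R − Im⟨D_{z_I} q̄(z), q(z)⟩ dz_I. Then db = 2 Im⟨D_{z_R} q̄(z), D_{z_I} q(z)⟩ dz_R ∧ dz_I = i γ(|z|²) dz ∧ dz̄, where γ(|z|²) := ⟨q̂(|z|²), q̂(|z|²)⟩ + 2|z|² ⟨q̂(|z|²), q̂'(|z|²)⟩, provided q̂ takes values in real-valued functions so that ⟨·,·⟩ is the real bilinear L² pairing. -/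
/-!
Because `q̂` is real, `Im⟨D q̄, q⟩` only sees the angular part of `q`, and the correction form is
`b = ρ(|z|²) (z_R dz_I − z_I dz_R)` with `ρ = ‖q̂‖²`. The exterior derivative of such a form is
`2 (ρ(s) + s ρ'(s)) dz_R ∧ dz_I` at `s = |z|²`, and `ρ + s ρ' = ‖q̂‖² + 2s⟨q̂, q̂'⟩ = γ`; expanding
`Im⟨D_{z_R} q̄, D_{z_I} q⟩` gives `γ(|z|²)` as well, the `q̂'`–`q̂'` terms cancelling.
-/

open Complex ComplexConjugate

section

variable {E : Type*} [NormedAddCommGroup E] [NormedSpace ℝ E]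

theorem hasFDerivAt_normSq (z : ℂ) :
    HasFDerivAt (fun w : ℂ => normSq w) ((2 * z.re) • reCLM + (2 * z.im) • imCLM) z := by
  have h := (hasStrictFDerivAt_norm_sq z).hasFDerivAt
  simp only [← normSq_eq_norm_sq] at h
  refine h.congr_fderiv ?_
  ext v
  simp only [smul_apply, coe_innerSL_apply, Complex.inner, mul_re, conj_re, conj_im, mul_neg,
    sub_neg_eq_add, smul_add, nsmul_eq_mul, Nat.cast_ofNat, add_apply, reCLM_apply, smul_eq_mul,
    imCLM_apply]
  ring

theorem HasDerivAt.hasFDerivAt_comp_normSq {f : ℝ → E} {f' : E} {z : ℂ}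
    (hf : HasDerivAt f f' (normSq z)) :
    HasFDerivAt (fun w => f (normSq w))
      ((2 * z.re) • reCLM.smulRight f' + (2 * z.im) • imCLM.smulRight f') z := by
  refine (hf.hasFDerivAt.comp z (hasFDerivAt_normSq z)).congr_fderiv ?_
  ext v
  simp [smul_smul]

theorem fderiv_smul_prodMk_apply {F : Type*} [NormedAddCommGroup F] [NormedSpace ℝ F]
    {ℓ₁ ℓ₂ : F →L[ℝ] ℝ} {g : F → E} {g' : F →L[ℝ] E} {z : F} (hg : HasFDerivAt g g' z)
    (v : F) :
    fderiv ℝ (fun w => (ℓ₁ w • g w, ℓ₂ w • g w)) z v =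
      (ℓ₁ v • g z + ℓ₁ z • g' v, ℓ₂ v • g z + ℓ₂ z • g' v) := by
  have h : HasFDerivAt (fun w => (ℓ₁ w • g w, ℓ₂ w • g w)) _ z :=
    (ℓ₁.hasFDerivAt.smul hg).prodMk (ℓ₂.hasFDerivAt.smul hg)
  rw [h.fderiv]
  simp [add_comm]

end

section Radial

variable {H : Type*} [NormedAddCommGroup H] [InnerProductSpace ℝ H]
  {f : ℝ → H} {f' : H} {z : ℂ}

/-- `w ↦ w f(|w|²)` for `c = 1` and `w ↦ w̄ f(|w|²)` for `c = -1`, the complexification of `H`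
being written as `H × H`. -/
def radialPair (f : ℝ → H) (c : ℝ) (w : ℂ) : H × H :=
  (w.re • f (normSq w), (c * w.im) • f (normSq w))

theorem fderiv_radialPair_one (hf : HasDerivAt f f' (normSq z)) (c : ℝ) :
    fderiv ℝ (radialPair f c) z 1 =
      (f (normSq z) + (2 * z.re ^ 2) • f', (2 * c * z.re * z.im) • f') := by
  have h :=
    fderiv_smul_prodMk_apply (ℓ₁ := reCLM) (ℓ₂ := c • imCLM) hf.hasFDerivAt_comp_normSq 1
  simp only [reCLM_apply, smul_apply, imCLM_apply, smul_eq_mul] at h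
  unfold radialPair
  rw [h]
  ext <;> simp [smul_smul] <;> ring_nf

theorem fderiv_radialPair_I (hf : HasDerivAt f f' (normSq z)) (c : ℝ) :
    fderiv ℝ (radialPair f c) z I =
      ((2 * z.re * z.im) • f', c • f (normSq z) + (2 * c * z.im ^ 2) • f') := by
  have h :=
    fderiv_smul_prodMk_apply (ℓ₁ := reCLM) (ℓ₂ := c • imCLM) hf.hasFDerivAt_comp_normSq I
  simp only [reCLM_apply, smul_apply, imCLM_apply, smul_eq_mul] at h
  unfold radialPair
  rw [h]
  ext <;> simp [smul_smul] <;> ring_nf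

/-- Imaginary part of the complex-bilinear extension of `⟪·, ·⟫_ℝ` to `H × H`. -/
def imPairing (u v : H × H) : ℝ := inner ℝ u.1 v.2 + inner ℝ u.2 v.1

theorem imPairing_fderiv_radialPair_one (hf : HasDerivAt f f' (normSq z)) :
    imPairing (fderiv ℝ (radialPair f (-1)) z 1) (radialPair f 1 z) =
      z.im * ‖f (normSq z)‖ ^ 2 := by
  rw [fderiv_radialPair_one hf]
  simp only [imPairing, radialPair, one_mul, inner_add_left, real_inner_smul_right,
    real_inner_self_eq_norm_sq, real_inner_smul_left, mul_neg, mul_one, neg_mul, neg_smul,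
    inner_neg_left]
  ring

theorem imPairing_fderiv_radialPair_I (hf : HasDerivAt f f' (normSq z)) :
    imPairing (fderiv ℝ (radialPair f (-1)) z I) (radialPair f 1 z) =
      -(z.re * ‖f (normSq z)‖ ^ 2) := by
  rw [fderiv_radialPair_I hf]
  simp only [imPairing, radialPair, one_mul, real_inner_smul_right, real_inner_smul_left, neg_smul,
    one_smul, mul_neg, mul_one, neg_mul, inner_add_left, inner_neg_left, real_inner_self_eq_norm_sq]
  ring

theorem imPairing_fderiv_radialPair_one_I (hf : HasDerivAt f f' (normSq z)) :
    imPairing (fderiv ℝ (radialPair f (-1)) z 1) (fderiv ℝ (radialPair f 1) z I)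
      = ‖f (normSq z)‖ ^ 2 + 2 * normSq z * inner ℝ (f (normSq z)) f' := by
  rw [fderiv_radialPair_one hf, fderiv_radialPair_I hf]
  simp only [imPairing, normSq_apply, one_smul, mul_one, inner_add_right, inner_add_left,
    real_inner_self_eq_norm_sq, real_inner_smul_left, real_inner_smul_right, real_inner_comm f',
    mul_neg, neg_mul, neg_smul, inner_neg_left, norm_smul, Real.norm_eq_abs, mul_pow, sq_abs]
  ring

end Radial

theorem fderiv_radial_form_antisymm {ρ : ℝ → ℝ} {ρ' : ℝ} {z : ℂ}
    (hρ : HasDerivAt ρ ρ' (normSq z)) (X Y : ℂ) :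
    fderiv ℝ (fun w => ρ (normSq w) * (w.re * Y.im - w.im * Y.re)) z X
      - fderiv ℝ (fun w => ρ (normSq w) * (w.re * X.im - w.im * X.re)) z Y
      = 2 * (ρ (normSq z) + normSq z * ρ') * (X.re * Y.im - X.im * Y.re) := by
  have hform :
      ∀ V : ℂ, HasFDerivAt (fun w => ρ (normSq w) * (w.re * V.im - w.im * V.re)) _ z :=
    fun V => hρ.hasFDerivAt_comp_normSq.mul
      ((reCLM.hasFDerivAt.mul_const V.im).sub (imCLM.hasFDerivAt.mul_const V.re))
  rw [(hform Y).fderiv, (hform X).fderiv]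
  simp only [normSq_apply, smul_add, add_apply, smul_apply, sub_apply, reCLM_apply, smul_eq_mul,
    imCLM_apply, ContinuousLinearMap.smulRight_apply]
  ring

theorem re_I_mul_ofReal_mul_sub_conj (r : ℝ) (X Y : ℂ) :
    (I * r * (X * conj Y - Y * conj X)).re = 2 * r * (X.re * Y.im - X.im * Y.re) := by
  simp only [mul_re, I_re, ofReal_re, zero_mul, I_im, ofReal_im, mul_zero, sub_self, sub_re,
    conj_re, conj_im, mul_neg, sub_neg_eq_add, mul_im, one_mul, zero_add, sub_im, zero_sub]
  ring

theorem stmt17_general {Hr : Type*} [NormedAddCommGroup Hr] [InnerProductSpace ℝ Hr]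
    (a : ℝ) (qh : ℝ → Hr)
    (hqh : ContDiffOn ℝ (⊤ : ℕ∞) qh (Set.Ioo (-a) a))
    (P : Hr × Hr → Hr × Hr → ℂ)
    (hP : ∀ u v : Hr × Hr, P u v =
      (((inner ℝ u.1 v.1 : ℝ) - (inner ℝ u.2 v.2 : ℝ) : ℝ) : ℂ)
        + (((inner ℝ u.1 v.2 : ℝ) + (inner ℝ u.2 v.1 : ℝ) : ℝ) : ℂ) * Complex.I)
    (q qc : ℂ → Hr × Hr)
    (hq : ∀ z : ℂ, q z = (z.re • qh (Complex.normSq z), z.im • qh (Complex.normSq z)))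
    (hqc : ∀ z : ℂ, qc z = (z.re • qh (Complex.normSq z), (-z.im) • qh (Complex.normSq z)))
    (γ : ℝ → ℝ)
    (hγ : ∀ s : ℝ, γ s = (inner ℝ (qh s) (qh s) : ℝ) + 2 * s * (inner ℝ (qh s) (deriv qh s) : ℝ))
    (b : ℂ → ℂ → ℝ)
    (hb : ∀ z w : ℂ, b z w =
      -(P (fderiv ℝ qc z 1) (q z)).im * w.re - (P (fderiv ℝ qc z Complex.I) (q z)).im * w.im) :
    ∀ z : ℂ, Complex.normSq z < a → ∀ X Y : ℂ,
      (fderiv ℝ (fun w => b w Y) z X - fderiv ℝ (fun w => b w X) z Y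
        = 2 * (P (fderiv ℝ qc z 1) (fderiv ℝ q z Complex.I)).im
            * (X.re * Y.im - X.im * Y.re))
      ∧ (fderiv ℝ (fun w => b w Y) z X - fderiv ℝ (fun w => b w X) z Y
        = (Complex.I * ((γ (Complex.normSq z) : ℝ) : ℂ)
            * (X * (starRingEnd ℂ) Y - Y * (starRingEnd ℂ) X)).re) := by
  intro z hz X Y
  have hqh' : ∀ w, normSq w < a → HasDerivAt qh (deriv qh (normSq w)) (normSq w) := fun w hw =>
    ((hqh.contDiffAt (Ioo_mem_nhds (by linarith [normSq_nonneg w]) hw)).differentiableAt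
      (by simp)).hasDerivAt
  have hq_eq : q = radialPair qh 1 := funext fun w => by simp [hq, radialPair]
  have hqc_eq : qc = radialPair qh (-1) := funext fun w => by simp [hqc, radialPair]
  have hPim : ∀ u v, (P u v).im = imPairing u v := by simp [hP, imPairing]
  have hb_eq : ∀ w, normSq w < a → ∀ V,
      b w V = ‖qh (normSq w)‖ ^ 2 * (w.re * V.im - w.im * V.re) := by
    intro w hw V
    rw [hb, hPim, hPim, hq_eq, hqc_eq, imPairing_fderiv_radialPair_one (hqh' w hw),
      imPairing_fderiv_radialPair_I (hqh' w hw)]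
    ring
  have hdb : fderiv ℝ (fun w => b w Y) z X - fderiv ℝ (fun w => b w X) z Y
      = 2 * γ (normSq z) * (X.re * Y.im - X.im * Y.re) := by
    have hU : {w | normSq w < a} ∈ nhds z :=
      (isOpen_lt continuous_normSq continuous_const).mem_nhds hz
    rw [(Filter.eventuallyEq_of_mem hU fun w hw => hb_eq w hw Y).fderiv_eq,
      (Filter.eventuallyEq_of_mem hU fun w hw => hb_eq w hw X).fderiv_eq,
      fderiv_radial_form_antisymm (hqh' z hz).norm_sq, hγ, real_inner_self_eq_norm_sq]
    ring
  rw [hdb, hPim, hq_eq, hqc_eq, imPairing_fderiv_radialPair_one_I (hqh' z hz),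
    re_I_mul_ofReal_mul_sub_conj, hγ, real_inner_self_eq_norm_sq]
  exact ⟨rfl, rfl⟩

/-- Computation of `db` for the correction 1-form
`b = −Im⟨D_{z_R} q̄, q⟩ dz_R − Im⟨D_{z_I} q̄, q⟩ dz_I` with `q(z) = z q̂(|z|²)`,
`q̂` real-vector valued: `db = 2 Im⟨D_{z_R} q̄, D_{z_I} q⟩ dz_R ∧ dz_I = iγ(|z|²) dz ∧ dz̄`,
where `γ(s) = ⟨q̂(s), q̂(s)⟩ + 2s ⟨q̂(s), q̂'(s)⟩`.  The complexification of the real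
Hilbert space `Hr` is modeled as `Hr × Hr` with the bilinear pairing `P`. -/
theorem stmt17 {Hr : Type*} [NormedAddCommGroup Hr] [InnerProductSpace ℝ Hr]
    (a : ℝ) (ha : 0 < a) (qh : ℝ → Hr)
    (hqh : ContDiffOn ℝ (⊤ : ℕ∞) qh (Set.Ioo (-a) a))
    (P : Hr × Hr → Hr × Hr → ℂ)
    (hP : ∀ u v : Hr × Hr, P u v =
      (((inner ℝ u.1 v.1 : ℝ) - (inner ℝ u.2 v.2 : ℝ) : ℝ) : ℂ)
        + (((inner ℝ u.1 v.2 : ℝ) + (inner ℝ u.2 v.1 : ℝ) : ℝ) : ℂ) * Complex.I)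
    (q qc : ℂ → Hr × Hr)
    (hq : ∀ z : ℂ, q z = (z.re • qh (Complex.normSq z), z.im • qh (Complex.normSq z)))
    (hqc : ∀ z : ℂ, qc z = (z.re • qh (Complex.normSq z), (-z.im) • qh (Complex.normSq z)))
    (γ : ℝ → ℝ)
    (hγ : ∀ s : ℝ, γ s = (inner ℝ (qh s) (qh s) : ℝ) + 2 * s * (inner ℝ (qh s) (deriv qh s) : ℝ))
    (b : ℂ → ℂ → ℝ)
    (hb : ∀ z w : ℂ, b z w =
      -(P (fderiv ℝ qc z 1) (q z)).im * w.re - (P (fderiv ℝ qc z Complex.I) (q z)).im * w.im) :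
    ∀ z : ℂ, Complex.normSq z < a → ∀ X Y : ℂ,
      (fderiv ℝ (fun w => b w Y) z X - fderiv ℝ (fun w => b w X) z Y
        = 2 * (P (fderiv ℝ qc z 1) (fderiv ℝ q z Complex.I)).im
            * (X.re * Y.im - X.im * Y.re))
      ∧ (fderiv ℝ (fun w => b w Y) z X - fderiv ℝ (fun w => b w X) z Y
        = (Complex.I * ((γ (Complex.normSq z) : ℝ) : ℂ)
            * (X * (starRingEnd ℂ) Y - Y * (starRingEnd ℂ) X)).re) :=
  stmt17_general a qh hqh P hP q qc hq hqc γ hγ b hb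
end
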